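/- arXiv:math/0411514 — 3 statements merged into one kernel-verified Lean document; each statement's English description precedes it below -/
import Mathlib

section
/- Let X = {x_1, x_2, …} be a countably infinite set well-ordered with order type ω (x_1 < x_2 < ⋯), and let 𝔖_(X) be the group of finitary permutations of X (permutations moving only finitely many elements). Then the symmetric cancellation ordering on X^⋄ corresponding to 𝔖_(X) and the lexicographic term ordering ≤_lex is a well-quasi-ordering (that is, ≤_lex is lovely for 𝔖_(X)). -/
/-!
Write `v ⊑ w` if some strictly increasing `φ : ℕ → ℕ` has `v i ≤ w (φ i)` for all `i`. Higman's
lemma, applied to the exponent lists of monomials, makes `⊑` a well-quasi-ordering, and `⊑` is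
contained in the symmetric cancellation ordering: if `v ⊑ w` via `φ`, then `v ≤lex w`, and a
finitary permutation `σ` agreeing with `φ` on `{0, …, max (supp v)}` gives `w = (w - σv)·σv`.
Every `v' ≤lex v` is supported in that same initial segment, where `σ = φ` preserves `≤lex`.
-/

/-- A quasi-ordering (here: any binary relation) `r` on `S` is a well-quasi-ordering if
every infinite sequence is good, i.e. there are `i < j` with `r (f i) (f j)`. -/
def IsWQO {S : Type*} (r : S → S → Prop) : Prop :=
  ∀ f : ℕ → S, ∃ i j : ℕ, i < j ∧ r (f i) (f j)

/-- A term ordering of the monoid of monomials `X →₀ ℕ`: a linear order which is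
well-founded, with `1 ≤ x` for every indeterminate `x`, and compatible with
multiplication by indeterminates. -/
def IsTermOrder {X : Type*} (r : (X →₀ ℕ) → (X →₀ ℕ) → Prop) : Prop :=
  IsLinearOrder (X →₀ ℕ) r ∧
  WellFounded (fun v w : X →₀ ℕ => r v w ∧ v ≠ w) ∧
  (∀ x : X, r 0 (Finsupp.single x 1)) ∧
  (∀ (v w : X →₀ ℕ) (x : X), r v w → r (Finsupp.single x 1 + v) (Finsupp.single x 1 + w))

/-- The symmetric cancellation ordering corresponding to a permutation group `G` on `X`
and a term ordering `r` of the monomials `X →₀ ℕ`:  `v ⪯ w` iff `r v w` and there are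
`σ ∈ G` and a monomial `u` with `w = u·σv` and `u·σv' ≤ w` for every `v' ≤ v`. -/
def SymCancel {X : Type*} (G : Subgroup (Equiv.Perm X))
    (r : (X →₀ ℕ) → (X →₀ ℕ) → Prop) (v w : X →₀ ℕ) : Prop :=
  r v w ∧ ∃ σ : Equiv.Perm X, σ ∈ G ∧ ∃ u : X →₀ ℕ,
    w = u + Finsupp.mapDomain (⇑σ) v ∧
    ∀ v' : X →₀ ℕ, r v' v → r (u + Finsupp.mapDomain (⇑σ) v') w

/-- The lexicographic ordering of monomials induced by a linear order on `X`:
`v ≤lex w` iff `v = w` or there is `x` with `v x < w x` and `v y = w y` for all `y > x`. -/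
def LexLe {X : Type*} [LinearOrder X] (v w : X →₀ ℕ) : Prop :=
  v = w ∨ ∃ x : X, v x < w x ∧ ∀ y : X, x < y → v y = w y

/-- The group of finitary permutations of `X` (those moving only finitely many points). -/
def finitaryPerms (X : Type*) : Subgroup (Equiv.Perm X) where
  carrier := {σ : Equiv.Perm X | {x : X | σ x ≠ x}.Finite}
  one_mem' := by simp
  mul_mem' := by
    intro σ τ hσ hτ
    refine Set.Finite.subset (Set.Finite.union hσ hτ) ?_
    intro x hx
    by_contra h
    simp only [Set.mem_union, Set.mem_setOf_eq] at h hx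
    push_neg at h
    exact hx (by simp [Equiv.Perm.mul_apply, h.1, h.2])
  inv_mem' := by
    intro σ hσ
    refine Set.Finite.subset hσ ?_
    intro x hx
    simp only [Set.mem_setOf_eq] at hx ⊢
    intro h
    exact hx (Equiv.Perm.inv_eq_iff_eq.mpr h.symm)

open Finsupp

def EmbLe (v w : ℕ →₀ ℕ) : Prop :=
  ∃ φ : ℕ → ℕ, StrictMono φ ∧ ∀ i, v i ≤ w (φ i)

section LexLe

variable {X : Type*} [LinearOrder X]

theorem lexLe_iff_toColex_le {v w : X →₀ ℕ} : LexLe v w ↔ toColex v ≤ toColex w := by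
  rw [LexLe, ← DFunLike.coe_fn_eq]
  exact or_congr_right (by rw [Finsupp.Colex.lt_iff]; simp only [ofColex_toColex, and_comm])

theorem lexLe_add_left (u : X →₀ ℕ) {v w : X →₀ ℕ} (h : LexLe v w) : LexLe (u + v) (u + w) :=
  lexLe_iff_toColex_le.mpr (add_le_add_right (lexLe_iff_toColex_le.mp h) (toColex u))

end LexLe

theorem StrictMono.apply_eq_self_of_le {φ : ℕ → ℕ} (hφ : StrictMono φ) {m : ℕ} (hm : φ m = m)
    {x : ℕ} (hx : x ≤ m) : φ x = x := by
  have h := hφ.add_le_nat (m - x) x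
  rw [Nat.sub_add_cancel hx, hm] at h
  have := hφ.le_apply (x := x)
  omega

theorem EmbLe.lexLe {v w : ℕ →₀ ℕ} (h : EmbLe v w) : LexLe v w := by
  obtain ⟨φ, hφ, hvw⟩ := h
  rw [lexLe_iff_toColex_le, ← not_lt, Finsupp.Colex.lt_iff]
  rintro ⟨x, hagree, hx⟩
  simp only [ofColex_toColex] at hagree hx
  -- `φ m = m` for the largest variable `m` of `v`, as `w = v` vanishes above `m`; hence `φ x = x`.
  have hv : v.support.Nonempty := ⟨x, mem_support_iff.mpr (by omega)⟩
  set m := v.support.max' hv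
  have hxm : x ≤ m := v.support.le_max' x (mem_support_iff.mpr (by omega))
  have hm : φ m = m := by
    by_contra hne
    have hlt : m < φ m := lt_of_le_of_ne hφ.le_apply (Ne.symm hne)
    have hvφm : v (φ m) = 0 := by
      by_contra h
      exact not_le.mpr hlt (v.support.le_max' _ (mem_support_iff.mpr h))
    have := hvw m
    rw [hagree _ (hxm.trans_lt hlt), hvφm] at this
    exact mem_support_iff.mp (v.support.max'_mem hv) (Nat.le_zero.mp this)
  have := hvw x
  rw [hφ.apply_eq_self_of_le hm hxm] at this
  omega

theorem mapDomain_le_of_forall_le {X Y : Type*} {φ : X → Y} (hφ : Function.Injective φ)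
    {v : X →₀ ℕ} {w : Y →₀ ℕ} (h : ∀ i, v i ≤ w (φ i)) : mapDomain φ v ≤ w := by
  intro y
  by_cases hy : y ∈ Set.range φ
  · obtain ⟨i, rfl⟩ := hy
    rw [mapDomain_apply hφ]
    exact h i
  · rw [mapDomain_of_notMem_range _ _ hy]
    exact Nat.zero_le _

section MapDomain

variable {X Y : Type*} [LinearOrder X] [LinearOrder Y]

theorem LexLe.mapDomain {φ : X → Y} (hφ : StrictMono φ) {v w : X →₀ ℕ} (h : LexLe v w) :
    LexLe (mapDomain φ v) (mapDomain φ w) := by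
  rcases h with rfl | ⟨x, hx, hagree⟩
  · exact Or.inl rfl
  refine Or.inr ⟨φ x, by simpa [mapDomain_apply hφ.injective], fun y hy => ?_⟩
  by_cases hyφ : y ∈ Set.range φ
  · obtain ⟨a, rfl⟩ := hyφ
    simp only [mapDomain_apply hφ.injective]
    exact hagree a (hφ.lt_iff_lt.mp hy)
  · simp only [mapDomain_of_notMem_range _ _ hyφ]

theorem LexLe.support_subset_Iic {v w : X →₀ ℕ} (h : LexLe v w) {M : X}
    (hw : ↑w.support ⊆ Set.Iic M) : ↑v.support ⊆ Set.Iic M := by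
  rcases h with rfl | ⟨x, hx, hagree⟩
  · exact hw
  intro y hy
  by_contra hyM
  have hxM : x ≤ M := hw (mem_support_iff.mpr (by omega))
  have hwy : y ∉ w.support := fun h => hyM (hw h)
  rw [Finset.mem_coe, mem_support_iff, hagree y (hxM.trans_lt (not_le.mp hyM))] at hy
  exact hwy (mem_support_iff.mpr hy)

end MapDomain

section FinitaryPerms

variable {X : Type*} [DecidableEq X]

theorem swap_mem_finitaryPerms (a b : X) : Equiv.swap a b ∈ finitaryPerms X :=
  (Set.toFinite {a, b}).subset fun x hx => by
    by_contra h
    simp only [Set.mem_insert_iff, Set.mem_singleton_iff, not_or] at h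
    exact hx (Equiv.swap_apply_of_ne_of_ne h.1 h.2)

theorem exists_mem_finitaryPerms_eqOn {φ : X → X} (s : Finset X) (hφ : Set.InjOn φ s) :
    ∃ σ ∈ finitaryPerms X, ∀ x ∈ s, σ x = φ x := by
  induction s using Finset.induction_on with
  | empty => exact ⟨1, one_mem _, by simp⟩
  | insert a s ha ih =>
    obtain ⟨σ, hσ, hσφ⟩ := ih (hφ.mono (by simp))
    refine ⟨Equiv.swap (φ a) (σ a) * σ, mul_mem (swap_mem_finitaryPerms _ _) hσ, fun x hx => ?_⟩
    rcases Finset.mem_insert.mp hx with rfl | hxs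
    · simp
    have hxa : x ≠ a := fun h => ha (h ▸ hxs)
    rw [Equiv.Perm.mul_apply, hσφ x hxs]
    refine Equiv.swap_apply_of_ne_of_ne (fun h => hxa (hφ (by simp [hxs]) (by simp) h)) ?_
    rw [← hσφ x hxs]
    exact fun h => hxa (σ.injective h)

end FinitaryPerms

theorem EmbLe.symCancel {v w : ℕ →₀ ℕ} (h : EmbLe v w) :
    SymCancel (finitaryPerms ℕ) LexLe v w := by
  refine ⟨h.lexLe, ?_⟩
  obtain ⟨φ, hφ, hvw⟩ := h
  set M := v.support.sup id
  have hvM : ↑v.support ⊆ Set.Iic M := fun i hi => Finset.le_sup (f := id) hi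
  obtain ⟨σ, hσ, hσφ⟩ := exists_mem_finitaryPerms_eqOn (Finset.Iic M) hφ.injective.injOn
  have hσ_eq : ∀ v' : ℕ →₀ ℕ, LexLe v' v → mapDomain σ v' = mapDomain φ v' := fun v' hv' =>
    mapDomain_congr fun x hx => hσφ x (Finset.mem_Iic.mpr (hv'.support_subset_Iic hvM hx))
  have hle : mapDomain φ v ≤ w := mapDomain_le_of_forall_le hφ.injective hvw
  refine ⟨σ, hσ, w - mapDomain φ v, ?_, fun v' hv' => ?_⟩
  · rw [hσ_eq v (Or.inl rfl), tsub_add_cancel_of_le hle]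
  · have := lexLe_add_left (w - mapDomain φ v) (hv'.mapDomain hφ)
    rwa [tsub_add_cancel_of_le hle, ← hσ_eq v' hv'] at this

theorem List.Forall₂.getD_le {α : Type*} [Preorder α] {l₁ l₂ : List α}
    (h : List.Forall₂ (· ≤ ·) l₁ l₂) (d : α) (i : ℕ) : l₁.getD i d ≤ l₂.getD i d := by
  induction h generalizing i with
  | nil => simp
  | cons hab _ ih => cases i <;> simp only [List.getD_cons_zero, List.getD_cons_succ, hab, ih]

theorem List.SublistForall₂.exists_strictMono_getD_le {α : Type*} [Preorder α] {l₁ l₂ : List α}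
    (h : List.SublistForall₂ (· ≤ ·) l₁ l₂) (d : α) :
    ∃ φ : ℕ → ℕ, StrictMono φ ∧ ∀ i, l₁.getD i d ≤ l₂.getD (φ i) d := by
  obtain ⟨l, hl₁, hl⟩ := List.sublistForall₂_iff.mp h
  obtain ⟨f, hf⟩ := List.sublist_iff_exists_orderEmbedding_getElem?_eq.mp hl
  refine ⟨f, f.strictMono, fun i => ?_⟩
  simpa only [List.getD_eq_getElem?_getD, hf] using hl₁.getD_le d i

theorem wellQuasiOrdered_sublistForall₂ {α : Type*} [Preorder α] [WellQuasiOrderedLE α] :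
    WellQuasiOrdered (List.SublistForall₂ (α := α) (· ≤ ·)) := by
  have h := (Set.partiallyWellOrderedOn_univ_iff.mpr (wellQuasiOrdered_le (α := α)))
    |>.partiallyWellOrderedOn_sublistForall₂ (· ≤ ·)
  rw [Set.eq_univ_of_forall fun _ _ _ => Set.mem_univ _] at h
  exact Set.partiallyWellOrderedOn_univ_iff.mp h

def expList (v : ℕ →₀ ℕ) : List ℕ := (List.range (v.support.sup id + 1)).map v

theorem expList_getD (v : ℕ →₀ ℕ) (i : ℕ) : (expList v).getD i 0 = v i := by
  rw [expList, List.getD_eq_getElem?_getD, List.getElem?_map]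
  rcases lt_or_ge i (v.support.sup id + 1) with hi | hi
  · simp [List.getElem?_range hi]
  · rw [List.getElem?_eq_none (by simpa using hi), Option.map_none, Option.getD_none, eq_comm,
      ← notMem_support_iff]
    exact fun hv => absurd hi (not_le.mpr (Nat.lt_succ_of_le (Finset.le_sup (f := id) hv)))

theorem EmbLe.of_sublistForall₂ {v w : ℕ →₀ ℕ}
    (h : List.SublistForall₂ (· ≤ ·) (expList v) (expList w)) : EmbLe v w := by
  obtain ⟨φ, hφ, hle⟩ := h.exists_strictMono_getD_le 0
  exact ⟨φ, hφ, fun i => by simpa only [expList_getD] using hle i⟩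

theorem wellQuasiOrdered_embLe : WellQuasiOrdered EmbLe := fun f =>
  (wellQuasiOrdered_sublistForall₂ (expList ∘ f)).imp fun _ =>
    .imp fun _ => .imp_right EmbLe.of_sublistForall₂

/-- For `X = {x_1 < x_2 < ⋯}` countably infinite of order type `ω`
(modelled by `ℕ` with its usual order), the symmetric cancellation ordering corresponding
to the group `𝔖_(X)` of finitary permutations and the lexicographic term ordering is a
well-quasi-ordering (i.e. `≤lex` is lovely for `𝔖_(X)`). -/
theorem stmt3 : IsWQO (SymCancel (finitaryPerms ℕ) (LexLe (X := ℕ))) := fun f =>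
  (wellQuasiOrdered_embLe f).imp fun _ => .imp fun _ => .imp_right EmbLe.symCancel
end

section
/- Let A be a commutative Noetherian ring, X a set, G a group of permutations of X, and ≤ a term ordering of X^⋄ that is lovely for G. Then every G-invariant ideal I of R = A[X] has a finite Gröbner basis: there exists a finite set B of nonzero elements of I such that lt(I) = lt(B). -/
/-- `ltSpan r prec B`: the `A`-submodule of `A[X]` generated by all monomial terms
`lc(g)·w` where `g ∈ B` is nonzero with leading monomial `v = lm g` (w.r.t. the term
ordering `r`) and `w` is a monomial with `v ⪯ w` (w.r.t. `prec`).  For `prec` the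
symmetric cancellation ordering this is the module `lt(B)` of the paper. -/
noncomputable def ltSpan {A : Type*} [CommRing A] {X : Type*}
    (r prec : (X →₀ ℕ) → (X →₀ ℕ) → Prop)
    (B : Set (MvPolynomial X A)) : Submodule A (MvPolynomial X A) :=
  Submodule.span A {p : MvPolynomial X A | ∃ g ∈ B, ∃ v ∈ g.support,
    (∀ m ∈ g.support, r m v) ∧ ∃ w : X →₀ ℕ, prec v w ∧
      p = MvPolynomial.monomial w (MvPolynomial.coeff v g)}

/-!
If no finite `B ⊆ I` works, we can pick `f₀, f₁, … ∈ I` such that the leading term of `fₙ`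
is not in `lt {f₀, …, fₙ₋₁}`. As `⪯` is a well-quasi-ordering, there is a subsequence along
which the leading monomials increase for `⪯`, and as `A` is Noetherian, some leading
coefficient along it lies in the ideal generated by the earlier ones; then the leading term
of that `fₙ` lies in `lt {f₀, …, fₙ₋₁}` after all.
-/

open MvPolynomial

theorem exists_seq_of_forall_finset_exists_range {α : Type*} [DecidableEq α]
    (Q : α → Prop) (P : Finset α → α → Prop)
    (h : ∀ s : Finset α, (∀ x ∈ s, Q x) → ∃ y, Q y ∧ P s y) :
    ∃ f : ℕ → α, ∀ n, Q (f n) ∧ P ((Finset.range n).image f) (f n) := by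
  obtain ⟨y₀, -⟩ := h ∅ (by simp)
  have h' : ∀ s : Finset α, ∃ y, (∀ x ∈ s, Q x) → Q y ∧ P s y := fun s =>
    (em (∀ x ∈ s, Q x)).elim (fun hs => (h s hs).imp fun _ hy _ => hy)
      fun hs => ⟨y₀, fun h => absurd h hs⟩
  choose g hg using h'
  let s : ℕ → Finset α := fun n => Nat.rec ∅ (fun _ t => insert (g t) t) n
  have hs : ∀ n, s n = (Finset.range n).image (g ∘ s) ∧ ∀ x ∈ s n, Q x := by
    intro n
    induction n with
    | zero => simp [s]
    | succ n ih =>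
      have hQ := (hg (s n) ih.2).1
      refine ⟨?_, ?_⟩
      · change insert (g (s n)) (s n) = _
        rw [Finset.range_add_one, Finset.image_insert, ← ih.1, Function.comp_apply]
      · change ∀ x ∈ insert (g (s n)) (s n), Q x
        simpa [hQ] using ih.2
  refine ⟨g ∘ s, fun n => ?_⟩
  rw [← (hs n).1]
  exact hg (s n) (hs n).2

theorem exists_mem_span_image_Iio {R M : Type*} [Semiring R] [AddCommMonoid M] [Module R M]
    [IsNoetherian R M] (x : ℕ → M) : ∃ n, x n ∈ Submodule.span R (x '' Set.Iio n) := by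
  let J : ℕ →o Submodule R M :=
    ⟨fun k => Submodule.span R (x '' Set.Iio k),
      fun _ _ hkl => Submodule.span_mono (Set.image_mono (Set.Iio_subset_Iio hkl))⟩
  obtain ⟨k, hk⟩ := monotone_stabilizes_iff_noetherian.mpr inferInstance J
  refine ⟨k, ?_⟩
  have hmem : x k ∈ J (k + 1) := Submodule.subset_span ⟨k, k.lt_succ_self, rfl⟩
  rwa [← hk (k + 1) k.le_succ] at hmem

theorem WellQuasiOrdered.exists_mem_span {R M N : Type*} [Semiring R] [AddCommMonoid M]
    [Module R M] [IsNoetherian R M] {prec : N → N → Prop} [IsPreorder N prec]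
    (hprec : WellQuasiOrdered prec) (v : ℕ → N) (a : ℕ → M) :
    ∃ n, a n ∈ Submodule.span R (a '' {i | i < n ∧ prec (v i) (v n)}) := by
  obtain ⟨g, hg⟩ := hprec.exists_monotone_subseq v
  obtain ⟨n, hn⟩ := exists_mem_span_image_Iio (R := R) (a ∘ g)
  refine ⟨g n, Submodule.span_mono ?_ hn⟩
  rintro _ ⟨i, hi, rfl⟩
  exact ⟨g i, ⟨g.strictMono hi, hg i n (le_of_lt hi)⟩, rfl⟩

instance SymCancel.isPreorder {X : Type*} (G : Subgroup (Equiv.Perm X))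
    (r : (X →₀ ℕ) → (X →₀ ℕ) → Prop) [IsPreorder (X →₀ ℕ) r] :
    IsPreorder (X →₀ ℕ) (SymCancel G r) where
  refl v := ⟨refl v, 1, one_mem G, 0, by simp [Finsupp.mapDomain_id],
    fun v' hv' => by simpa [Finsupp.mapDomain_id] using hv'⟩
  trans := by
    rintro v w t ⟨hvw, σ, hσ, u, rfl, hu⟩ ⟨hwt, τ, hτ, u', rfl, hu'⟩
    have hcomp : ∀ v' : X →₀ ℕ, u' + Finsupp.mapDomain τ (u + Finsupp.mapDomain σ v')
        = u' + Finsupp.mapDomain τ u + Finsupp.mapDomain (τ * σ) v' := fun v' => by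
      simp [Finsupp.mapDomain_add, Equiv.Perm.coe_mul, Finsupp.mapDomain_comp, add_assoc]
    refine ⟨_root_.trans hvw hwt, τ * σ, mul_mem hτ hσ, u' + Finsupp.mapDomain τ u,
      hcomp v, fun v' hv' => ?_⟩
    rw [← hcomp]
    exact hu' _ (hu v' hv')

section LeadingTerms

variable {A : Type*} [CommRing A] {X : Type*} (r prec : (X →₀ ℕ) → (X →₀ ℕ) → Prop)

noncomputable def leadingCoeffSpan (B : Set (MvPolynomial X A)) (w : X →₀ ℕ) : Ideal A :=
  Submodule.span A {c | ∃ g ∈ B, ∃ v ∈ g.support,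
    (∀ m ∈ g.support, r m v) ∧ prec v w ∧ c = coeff v g}

variable {r prec}

theorem ltSpan_mono {B B' : Set (MvPolynomial X A)} (h : B ⊆ B') :
    ltSpan r prec B ≤ ltSpan r prec B' :=
  Submodule.span_mono fun _ ⟨g, hg, hrest⟩ => ⟨g, h hg, hrest⟩

theorem leadingCoeffSpan_mono_right [IsTrans (X →₀ ℕ) prec] {B : Set (MvPolynomial X A)}
    {v w : X →₀ ℕ} (hvw : prec v w) :
    leadingCoeffSpan r prec B v ≤ leadingCoeffSpan r prec B w :=
  Submodule.span_mono fun _ ⟨g, hg, v', hv', hmax, hv'v, hc⟩ =>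
    ⟨g, hg, v', hv', hmax, _root_.trans hv'v hvw, hc⟩

theorem monomial_mem_ltSpan_iff {B : Set (MvPolynomial X A)} {w : X →₀ ℕ} {a : A} :
    monomial w a ∈ ltSpan r prec B ↔ a ∈ leadingCoeffSpan r prec B w := by
  classical
  constructor
  · intro h
    have hmap := Submodule.mem_map_of_mem (f := lcoeff A w) h
    rw [ltSpan, Submodule.map_span, lcoeff_apply, coeff_monomial, if_pos rfl] at hmap
    refine Submodule.span_le.mpr ?_ hmap
    rintro _ ⟨_, ⟨g, hg, v, hv, hmax, w', hvw', rfl⟩, rfl⟩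
    rw [SetLike.mem_coe, lcoeff_apply, coeff_monomial]
    split_ifs with hw
    · exact Submodule.subset_span ⟨g, hg, v, hv, hmax, hw ▸ hvw', rfl⟩
    · exact zero_mem _
  · intro h
    have hmap := Submodule.mem_map_of_mem (f := monomial w) h
    rw [leadingCoeffSpan, Submodule.map_span] at hmap
    refine Submodule.span_le.mpr ?_ hmap
    rintro _ ⟨_, ⟨g, hg, v, hv, hmax, hvw, rfl⟩, rfl⟩
    exact Submodule.subset_span ⟨g, hg, v, hv, hmax, w, hvw, rfl⟩

theorem ltSpan_le_of_forall_coeff_mem [IsTrans (X →₀ ℕ) prec] {S B : Set (MvPolynomial X A)}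
    (h : ∀ g ∈ S, ∀ v ∈ g.support, (∀ m ∈ g.support, r m v) →
      coeff v g ∈ leadingCoeffSpan r prec B v) :
    ltSpan r prec S ≤ ltSpan r prec B :=
  Submodule.span_le.mpr fun _ ⟨g, hg, v, hv, hmax, _, hvw, hp⟩ =>
    hp ▸ monomial_mem_ltSpan_iff.mpr (leadingCoeffSpan_mono_right hvw (h g hg v hv hmax))

end LeadingTerms

theorem stmt12_general {A : Type*} [CommRing A] [IsNoetherianRing A] {X : Type*}
    (G : Subgroup (Equiv.Perm X)) (r : (X →₀ ℕ) → (X →₀ ℕ) → Prop)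
    (hr : IsTermOrder r) (hlovely : IsWQO (SymCancel G r))
    (I : Ideal (MvPolynomial X A)) :
    ∃ B : Finset (MvPolynomial X A), ↑B ⊆ (I : Set (MvPolynomial X A)) ∧
      (0 : MvPolynomial X A) ∉ B ∧
      ltSpan r (SymCancel G r) (I : Set (MvPolynomial X A)) =
        ltSpan r (SymCancel G r) (↑B : Set (MvPolynomial X A)) := by
  classical
  have := hr.1
  by_contra! hcon
  have hbad : ∀ s : Finset (MvPolynomial X A), (∀ g ∈ s, g ∈ I ∧ g ≠ 0) →
      ∃ f, (f ∈ I ∧ f ≠ 0) ∧ ∃ v ∈ f.support, (∀ m ∈ f.support, r m v) ∧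
        coeff v f ∉ leadingCoeffSpan r (SymCancel G r) (s : Set _) v := by
    intro s hs
    have hsI : (s : Set (MvPolynomial X A)) ⊆ I := fun g hg => (hs g hg).1
    have hnle : ¬ ltSpan r (SymCancel G r) (I : Set (MvPolynomial X A)) ≤
        ltSpan r (SymCancel G r) (s : Set (MvPolynomial X A)) := fun h =>
      hcon s hsI (fun h0 => (hs 0 h0).2 rfl) (h.antisymm (ltSpan_mono hsI))
    contrapose! hnle
    exact ltSpan_le_of_forall_coeff_mem fun g hg v hv hmax =>
      hnle g ⟨hg, by rintro rfl; simp at hv⟩ v hv hmax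
  obtain ⟨f, hf⟩ := exists_seq_of_forall_finset_exists_range _ _ hbad
  choose v hv hmax hnot using fun n => (hf n).2
  obtain ⟨n, hn⟩ := WellQuasiOrdered.exists_mem_span (R := A) hlovely v fun n => coeff (v n) (f n)
  refine hnot n (Submodule.span_le.mpr ?_ hn)
  rintro _ ⟨i, ⟨hin, hprec⟩, rfl⟩
  exact Submodule.subset_span ⟨f i, Finset.mem_image_of_mem f (Finset.mem_range.mpr hin),
    v i, hv i, hmax i, hprec, rfl⟩

/-- If `A` is commutative Noetherian and the term ordering `r` of the
monomials is lovely for `G`, then every `G`-invariant ideal `I` of `A[X]` has a finite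
Gröbner basis: a finite set `B` of nonzero elements of `I` with `lt(I) = lt(B)`. -/
theorem stmt12 {A : Type*} [CommRing A] [IsNoetherianRing A] {X : Type*}
    (G : Subgroup (Equiv.Perm X)) (r : (X →₀ ℕ) → (X →₀ ℕ) → Prop)
    (hr : IsTermOrder r) (hlovely : IsWQO (SymCancel G r))
    (I : Ideal (MvPolynomial X A))
    (hI : ∀ σ ∈ G, ∀ f ∈ I, MvPolynomial.rename (⇑σ) f ∈ I) :
    ∃ B : Finset (MvPolynomial X A), ↑B ⊆ (I : Set (MvPolynomial X A)) ∧
      (0 : MvPolynomial X A) ∉ B ∧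
      ltSpan r (SymCancel G r) (I : Set (MvPolynomial X A)) =
        ltSpan r (SymCancel G r) (↑B : Set (MvPolynomial X A)) :=
  stmt12_general G r hr hlovely I
end

section
/- Let A be a commutative ring, X a set, G a group of permutations of X, and ≤ a term ordering of X^⋄. Let I be a G-invariant ideal of R = A[X] and B a set of nonzero elements of I that is a Gröbner basis for I, i.e. lt(I) = lt(B). Then I equals the ideal of R generated by {σg : σ ∈ G, g ∈ B}. -/
open MvPolynomial

theorem Finset.exists_mem_forall_rel {α : Type*} {r : α → α → Prop} [IsTrans α r] [Std.Total r]
    {s : Finset α} (hs : s.Nonempty) : ∃ v ∈ s, ∀ m ∈ s, r m v := by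
  induction hs using Finset.Nonempty.cons_induction with
  | singleton a => exact ⟨a, by simp, by simpa using refl_of r a⟩
  | cons a s _ _ ih =>
    obtain ⟨v, hv, hvmax⟩ := ih
    rcases total_of r a v with hav | hva
    · exact ⟨v, by simp [hv], by simpa [hav] using hvmax⟩
    · exact ⟨a, by simp, by simpa [refl_of r a] using fun m hm => trans_of r (hvmax m hm) hva⟩

namespace MvPolynomial

variable {A X : Type*} [CommRing A]

def IsLeadingMonomial (r : (X →₀ ℕ) → (X →₀ ℕ) → Prop) (f : MvPolynomial X A)
    (w : X →₀ ℕ) : Prop :=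
  w ∈ f.support ∧ ∀ m ∈ f.support, r m w

theorem exists_isLeadingMonomial {r : (X →₀ ℕ) → (X →₀ ℕ) → Prop} [IsLinearOrder _ r]
    {f : MvPolynomial X A} (hf : f ≠ 0) : ∃ w, IsLeadingMonomial r f w :=
  Finset.exists_mem_forall_rel (support_nonempty.2 hf)

theorem exists_eq_add_mapDomain_of_mem_support_monomial_mul_rename {Y : Type*} (f : X → Y)
    {u m : Y →₀ ℕ} {g : MvPolynomial X A} (hm : m ∈ (monomial u 1 * rename f g).support) :
    ∃ m' ∈ g.support, m = u + Finsupp.mapDomain f m' := by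
  rw [mem_support_iff, coeff_monomial_mul'] at hm
  split_ifs at hm with hum
  · rw [one_mul] at hm
    obtain ⟨m', hm', hc⟩ := coeff_rename_ne_zero _ _ _ hm
    exact ⟨m', mem_support_iff.2 hc, by rw [hm', add_tsub_cancel_of_le hum]⟩
  · exact absurd rfl hm

noncomputable def orbitSpan (G : Subgroup (Equiv.Perm X)) (B : Set (MvPolynomial X A)) :
    Ideal (MvPolynomial X A) :=
  Ideal.span {p | ∃ σ ∈ G, ∃ g ∈ B, p = rename (⇑σ) g}

theorem orbitSpan_le {G : Subgroup (Equiv.Perm X)} {B : Set (MvPolynomial X A)}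
    {I : Ideal (MvPolynomial X A)} (hI : ∀ σ ∈ G, ∀ f ∈ I, rename (⇑σ) f ∈ I)
    (hBI : B ⊆ I) : orbitSpan G B ≤ I := by
  rw [orbitSpan, Ideal.span_le]
  rintro p ⟨σ, hσ, g, hg, rfl⟩
  exact hI σ hσ g (hBI hg)

theorem monomial_mem_ltSpan_symmCancel {G : Subgroup (Equiv.Perm X)}
    {r : (X →₀ ℕ) → (X →₀ ℕ) → Prop} [Std.Refl r] {S : Set (MvPolynomial X A)}
    {f : MvPolynomial X A} (hf : f ∈ S) {w : X →₀ ℕ} (hw : IsLeadingMonomial r f w) :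
    monomial w (coeff w f) ∈ ltSpan r (SymCancel G r) S := by
  refine Submodule.subset_span ⟨f, hf, w, hw.1, hw.2, w, ⟨refl_of r w, 1, G.one_mem, 0, ?_⟩, rfl⟩
  simp [Finsupp.mapDomain_id]

theorem exists_mem_orbitSpan_coeff_eq {G : Subgroup (Equiv.Perm X)}
    {r : (X →₀ ℕ) → (X →₀ ℕ) → Prop} {B : Set (MvPolynomial X A)}
    {p : MvPolynomial X A} (hp : p ∈ ltSpan r (SymCancel G r) B) (w : X →₀ ℕ) :
    ∃ F ∈ orbitSpan G B, coeff w F = coeff w p ∧ ∀ m ∈ F.support, r m w := by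
  classical
  induction hp using Submodule.span_induction with
  | mem p hp =>
    obtain ⟨g, hg, v, -, hvmax, w', ⟨-, σ, hσ, u, rfl, hbound⟩, rfl⟩ := hp
    by_cases hw : u + Finsupp.mapDomain σ v = w
    · subst hw
      refine ⟨monomial u 1 * rename σ g,
        Ideal.mul_mem_left _ _ (Ideal.subset_span ⟨σ, hσ, g, hg, rfl⟩), ?_, ?_⟩
      · rw [coeff_monomial_mul, one_mul, coeff_rename_mapDomain _ σ.injective, coeff_monomial,
          if_pos rfl]
      · intro m hm
        obtain ⟨m', hm', rfl⟩ := exists_eq_add_mapDomain_of_mem_support_monomial_mul_rename _ hm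
        exact hbound m' (hvmax m' hm')
    · exact ⟨0, Submodule.zero_mem _, by simp [coeff_monomial, hw], by simp⟩
  | zero => exact ⟨0, Submodule.zero_mem _, by simp, by simp⟩
  | add p q _ _ hp hq =>
    obtain ⟨F, hF, hFw, hFr⟩ := hp
    obtain ⟨F', hF', hF'w, hF'r⟩ := hq
    refine ⟨F + F', Submodule.add_mem _ hF hF', by simp [hFw, hF'w], fun m hm => ?_⟩
    rcases Finset.mem_union.1 (support_add hm) with hm | hm
    exacts [hFr m hm, hF'r m hm]
  | smul a p _ hp =>
    obtain ⟨F, hF, hFw, hFr⟩ := hp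
    refine ⟨a • F, ?_, by simp [hFw], fun m hm => hFr m (support_smul hm)⟩
    rw [smul_eq_C_mul]
    exact Ideal.mul_mem_left _ _ hF

theorem le_of_forall_isLeadingMonomial {r : (X →₀ ℕ) → (X →₀ ℕ) → Prop} [IsLinearOrder _ r]
    (hwf : WellFounded fun v w => r v w ∧ v ≠ w) {I J : Ideal (MvPolynomial X A)} (hJI : J ≤ I)
    (h : ∀ f ∈ I, ∀ w, IsLeadingMonomial r f w →
      ∃ F ∈ J, coeff w F = coeff w f ∧ ∀ m ∈ F.support, r m w) : I ≤ J := by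
  classical
  suffices key : ∀ w, ∀ f ∈ I, IsLeadingMonomial r f w → f ∈ J by
    intro f hf
    by_cases hf0 : f = 0
    · exact hf0 ▸ J.zero_mem
    · obtain ⟨w, hw⟩ := exists_isLeadingMonomial (r := r) hf0
      exact key w f hf hw
  intro w
  induction w using hwf.induction with
  | _ w ih =>
  intro f hf hw
  obtain ⟨F, hFJ, hFw, hFr⟩ := h f hf w hw
  have hsub : f - F ∈ I := I.sub_mem hf (hJI hFJ)
  suffices f - F ∈ J by simpa using J.add_mem this hFJ
  by_cases h0 : f - F = 0
  · exact h0 ▸ J.zero_mem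
  obtain ⟨w', hw'⟩ := exists_isLeadingMonomial (r := r) h0
  refine ih w' ⟨?_, fun hww => ?_⟩ _ hsub hw'
  · rcases Finset.mem_union.1 (support_sub _ f F hw'.1) with hm | hm
    exacts [hw.2 _ hm, hFr _ hm]
  · have := hw'.1
    rw [mem_support_iff, hww, coeff_sub, hFw, sub_self] at this
    exact this rfl

end MvPolynomial

theorem stmt13_general {A : Type*} [CommRing A] {X : Type*}
    (G : Subgroup (Equiv.Perm X)) (r : (X →₀ ℕ) → (X →₀ ℕ) → Prop)
    (hr : IsTermOrder r)
    (I : Ideal (MvPolynomial X A))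
    (hI : ∀ σ ∈ G, ∀ f ∈ I, MvPolynomial.rename (⇑σ) f ∈ I)
    (B : Set (MvPolynomial X A)) (hBI : B ⊆ (I : Set (MvPolynomial X A)))
    (hGB : ltSpan r (SymCancel G r) (I : Set (MvPolynomial X A)) =
      ltSpan r (SymCancel G r) B) :
    I = Ideal.span {p : MvPolynomial X A |
      ∃ σ ∈ G, ∃ g ∈ B, p = MvPolynomial.rename (⇑σ) g} := by
  classical
  obtain ⟨hlin, hwf, -⟩ := hr
  refine le_antisymm (le_of_forall_isLeadingMonomial hwf (orbitSpan_le hI hBI) ?_)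
    (orbitSpan_le hI hBI)
  intro f hf w hw
  have hlt := hGB ▸ monomial_mem_ltSpan_symmCancel (G := G) (SetLike.mem_coe.2 hf) hw
  obtain ⟨F, hF, hFw, hFr⟩ := exists_mem_orbitSpan_coeff_eq hlt w
  exact ⟨F, hF, by rwa [coeff_monomial, if_pos rfl] at hFw, hFr⟩

/-- Let `I` be a `G`-invariant ideal of `A[X]` (`A` a commutative
ring) and `B` a set of nonzero elements of `I` which is a Gröbner basis for `I`, i.e.
`lt(I) = lt(B)`.  Then `I` is the ideal of `A[X]` generated by `{σg : σ ∈ G, g ∈ B}`. -/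
theorem stmt13 {A : Type*} [CommRing A] {X : Type*}
    (G : Subgroup (Equiv.Perm X)) (r : (X →₀ ℕ) → (X →₀ ℕ) → Prop)
    (hr : IsTermOrder r)
    (I : Ideal (MvPolynomial X A))
    (hI : ∀ σ ∈ G, ∀ f ∈ I, MvPolynomial.rename (⇑σ) f ∈ I)
    (B : Set (MvPolynomial X A)) (hBI : B ⊆ (I : Set (MvPolynomial X A)))
    (hB0 : ∀ g ∈ B, g ≠ 0)
    (hGB : ltSpan r (SymCancel G r) (I : Set (MvPolynomial X A)) =
      ltSpan r (SymCancel G r) B) :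
    I = Ideal.span {p : MvPolynomial X A |
      ∃ σ ∈ G, ∃ g ∈ B, p = MvPolynomial.rename (⇑σ) g} :=
  stmt13_general G r hr I hI B hBI hGB
end
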